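/- arXiv:1002.3511 — 3 statements merged into one kernel-verified Lean document; each statement's English description precedes it below -/
import Mathlib

section
/- If a point p on the d-approximate boundary M is dominated by exactly k points of S, then there exists a segment of M whose left endpoint is dominated by at least k points of S, and a segment of M whose right endpoint is dominated by at most k points of S. -/
open scoped Classical

/-- `dominates p q` : point `p` dominates point `q`, i.e. `p.x ≥ q.x` and `p.y ≥ q.y`. -/
def dominates (p q : ℝ × ℝ) : Prop := q.1 ≤ p.1 ∧ q.2 ≤ p.2

theorem dominates_trans {p q r : ℝ × ℝ} (hpq : dominates p q) (hqr : dominates q r) :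
    dominates p r :=
  ⟨hqr.1.trans hpq.1, hqr.2.trans hpq.2⟩

theorem card_filter_dominates_anti (S : Finset (ℝ × ℝ)) {p q : ℝ × ℝ} (hqp : dominates q p) :
    (S.filter (fun r => dominates r q)).card ≤ (S.filter (fun r => dominates r p)).card :=
  Finset.card_le_card <| Finset.monotone_filter_right _ fun _ _ hr => dominates_trans hr hqp

theorem stmt_0_general (S : Finset (ℝ × ℝ)) (M : Finset (ℝ × ℝ × ℝ))
    (p : ℝ × ℝ) (k : ℕ)
    (hon : ∃ seg ∈ M, seg.1 ≤ p.1 ∧ p.1 ≤ seg.2.1 ∧ p.2 = seg.2.2)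
    (hk : (S.filter (fun q => dominates q p)).card = k) :
    (∃ seg ∈ M, k ≤ (S.filter (fun q => dominates q (seg.1, seg.2.2))).card) ∧
    (∃ seg ∈ M, (S.filter (fun q => dominates q (seg.2.1, seg.2.2))).card ≤ k) := by
  obtain ⟨seg, hseg, hstart, hend, hy⟩ := hon
  subst hk
  have hp_dom_start : dominates p (seg.1, seg.2.2) := ⟨hstart, hy.ge⟩
  have hend_dom_p : dominates (seg.2.1, seg.2.2) p := ⟨hend, hy.le⟩
  exact ⟨⟨seg, hseg, card_filter_dominates_anti S hp_dom_start⟩,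
    ⟨seg, hseg, card_filter_dominates_anti S hend_dom_p⟩⟩

/-- A horizontal segment of the staircase is encoded as `(start, end, y)`. -/
theorem stmt_0 (S : Finset (ℝ × ℝ)) (d : ℕ) (M : Finset (ℝ × ℝ × ℝ))
    (hM : ∀ seg ∈ M, seg.1 ≤ seg.2.1)
    (p : ℝ × ℝ) (k : ℕ)
    (hon : ∃ seg ∈ M, seg.1 ≤ p.1 ∧ p.1 ≤ seg.2.1 ∧ p.2 = seg.2.2)
    (hk : (S.filter (fun q => dominates q p)).card = k) :
    (∃ seg ∈ M, k ≤ (S.filter (fun q => dominates q (seg.1, seg.2.2))).card) ∧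
    (∃ seg ∈ M, (S.filter (fun q => dominates q (seg.2.1, seg.2.2))).card ≤ k) :=
  stmt_0_general S M p k hon hk
end

section
/- Let sets H_2, …, H_m of points satisfy: (i) |H_i| ≥ 2^{2i-1} for 2 ≤ i ≤ m-1; (ii) every point of H_{i+1} x-overlaps at most 2^{2i-2} points of H_i; (iii) at most 2^{2i-3} points of H_i x-overlap with H_{i-1}. Then no point of H_{i+1} x-overlaps with any point of H_{i-1}, for all 3 ≤ i ≤ m-1. -/
open scoped Classical

/-! If some `p ∈ H (i+1)` lay right of some `q ∈ H (i-1)`, every point of `H i` would either lie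
left of `p` (at most `2^(2i-2)` points, by (ii)) or right of `q`, hence x-overlap `H (i-1)` (at most
`2^(2i-3)` points, by (iii)); so `|H i| ≤ 2^(2i-2) + 2^(2i-3) < 2^(2i-1)`, contradicting (i). -/

theorem Finset.card_le_card_filter_lt_add_card_filter_overlap {α β : Type*} [LinearOrder α]
    (S T : Finset (α × β)) {p q : α × β} (hq : q ∈ T) (hqp : q.1 < p.1) :
    S.card ≤ (S.filter (fun r => r.1 < p.1)).card +
      (S.filter (fun r => ∃ q ∈ T, q.1 < r.1)).card := by
  refine (Finset.card_le_card fun r hr => ?_).trans (Finset.card_union_le _ _)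
  simp only [Finset.mem_union, Finset.mem_filter]
  rcases lt_or_ge r.1 p.1 with hrp | hpr
  · exact Or.inl ⟨hr, hrp⟩
  · exact Or.inr ⟨hr, q, hq, hqp.trans_le hpr⟩

theorem two_pow_succ_add_two_pow_lt (n : ℕ) : 2 ^ (n + 1) + 2 ^ n < 2 ^ (n + 2) := by
  have := Nat.one_le_two_pow (n := n)
  rw [pow_succ, pow_succ, pow_succ]
  omega

theorem stmt_8_general (m : ℕ) (H : ℕ → Finset (ℝ × ℝ))
    (h1 : ∀ i, 2 ≤ i → i ≤ m - 1 → 2 ^ (2 * i - 1) ≤ (H i).card)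
    (h2 : ∀ i, 2 ≤ i → i + 1 ≤ m →
      ∀ p ∈ H (i + 1), ((H i).filter (fun q => q.1 < p.1)).card ≤ 2 ^ (2 * i - 2))
    (h3 : ∀ i, 3 ≤ i → i ≤ m →
      ((H i).filter (fun p => ∃ q ∈ H (i - 1), q.1 < p.1)).card ≤ 2 ^ (2 * i - 3)) :
    ∀ i, 3 ≤ i → i ≤ m - 1 → ∀ p ∈ H (i + 1), ∀ q ∈ H (i - 1), p.1 ≤ q.1 := by
  intro i hi him p hp q hq
  by_contra! hqp
  have hlarge := h1 i (by omega) him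
  have hleft := h2 i (by omega) (by omega) p hp
  have hoverlap := h3 i hi (by omega)
  have hcover := (H i).card_le_card_filter_lt_add_card_filter_overlap (H (i - 1)) hq hqp
  have hpow := two_pow_succ_add_two_pow_lt (2 * i - 3)
  rw [show 2 * i - 3 + 1 = 2 * i - 2 by omega, show 2 * i - 3 + 2 = 2 * i - 1 by omega] at hpow
  omega

/-- Logarithmic decomposition `H_2, …, H_m` of planar points with distinct `x`-coordinates.
A point `p` x-overlaps a point `q` if `p.x > q.x`.  Under conditions (i)–(iii) below,
no point of `H_{i+1}` x-overlaps with any point of `H_{i-1}` for `3 ≤ i ≤ m-1`. -/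
theorem stmt_8 (m : ℕ) (H : ℕ → Finset (ℝ × ℝ))
    (hdisj : ∀ i j, 2 ≤ i → i ≤ m → 2 ≤ j → j ≤ m → i ≠ j → Disjoint (H i) (H j))
    (hxinj : ∀ i j, 2 ≤ i → i ≤ m → 2 ≤ j → j ≤ m →
      ∀ p ∈ H i, ∀ q ∈ H j, p ≠ q → p.1 ≠ q.1)
    (h1 : ∀ i, 2 ≤ i → i ≤ m - 1 → 2 ^ (2 * i - 1) ≤ (H i).card)
    (h2 : ∀ i, 2 ≤ i → i + 1 ≤ m →
      ∀ p ∈ H (i + 1), ((H i).filter (fun q => q.1 < p.1)).card ≤ 2 ^ (2 * i - 2))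
    (h3 : ∀ i, 3 ≤ i → i ≤ m →
      ((H i).filter (fun p => ∃ q ∈ H (i - 1), q.1 < p.1)).card ≤ 2 ^ (2 * i - 3)) :
    ∀ i, 3 ≤ i → i ≤ m - 1 → ∀ p ∈ H (i + 1), ∀ q ∈ H (i - 1), p.1 ≤ q.1 :=
  stmt_8_general m H h1 h2 h3
end

section
/- For a three-sided query [a,b] × (−∞, c] decomposed over a balanced tree: if node v has children v_1, …, v_t with consecutive intervals int(v_1), …, int(v_t) covering int(v), [a,b] ⊆ int(v) but [a,b] is not contained in any single int(v_i), a ∈ int(v_r−1) and b ∈ int(v_{q+1}) with int(v_j) ⊆ [a,b] for r ≤ j ≤ q, then every point p of S with p.x ∈ [a,b] and p.y ≤ c lies either in some S_{v_j} (r ≤ j ≤ q) with p.y ≤ c, or satisfies the dominance query (p.x ≥ a, p.y ≤ c) within S_{v_{r-1}}, or the dominance query (p.x ≤ b, p.y ≤ c) within S_{v_{q+1}}; and conversely all such points have p.x ∈ [a,b] and p.y ≤ c. -/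
theorem index_le_of_mem_of_le {ι α : Type*} [LinearOrder ι] [Preorder α] {s : ι → Set α}
    (hs : ∀ i j, i < j → ∀ x ∈ s i, ∀ y ∈ s j, x < y)
    {i j : ι} {x y : α} (hx : x ∈ s i) (hy : y ∈ s j) (hxy : x ≤ y) : i ≤ j :=
  not_lt.1 fun hji => (hs j i hji y hy x hx).not_ge hxy

theorem stmt_18_general (S : Finset (ℝ × ℝ))
    (t : ℕ) (int : Fin t → Set ℝ) (a b c : ℝ)
    (hord : ∀ i j : Fin t, i < j → ∀ x ∈ int i, ∀ y ∈ int j, x < y)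
    (hcover : Set.Icc a b ⊆ ⋃ j, int j)
    (r q : Fin t) (hq1 : q.1 + 1 < t) (hrq : r ≤ q)
    (hmid : ∀ j : Fin t, r ≤ j → j ≤ q → int j ⊆ Set.Icc a b)
    (ha : a ∈ int ⟨r.1 - 1, lt_of_le_of_lt (Nat.sub_le _ _) r.2⟩)
    (hb : b ∈ int ⟨q.1 + 1, hq1⟩) :
    ∀ p ∈ S,
      ((a ≤ p.1 ∧ p.1 ≤ b ∧ p.2 ≤ c) ↔
        ((∃ j : Fin t, r ≤ j ∧ j ≤ q ∧ p.1 ∈ int j ∧ p.2 ≤ c) ∨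
          (p.1 ∈ int ⟨r.1 - 1, lt_of_le_of_lt (Nat.sub_le _ _) r.2⟩ ∧ a ≤ p.1 ∧ p.2 ≤ c) ∨
          (p.1 ∈ int ⟨q.1 + 1, hq1⟩ ∧ p.1 ≤ b ∧ p.2 ≤ c))) := by
  intro p _
  set r' : Fin t := ⟨r.1 - 1, lt_of_le_of_lt (Nat.sub_le _ _) r.2⟩
  set q' : Fin t := ⟨q.1 + 1, hq1⟩
  have hr'q' : r' < q' := Fin.lt_def.2 (by simp only [r', q']; omega)
  constructor
  · rintro ⟨hap, hpb, hpc⟩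
    obtain ⟨j, hj⟩ := Set.mem_iUnion.1 (hcover ⟨hap, hpb⟩)
    have hr'j : r.1 - 1 ≤ j.1 := index_le_of_mem_of_le hord ha hj hap
    have hjq' : j.1 ≤ q.1 + 1 := index_le_of_mem_of_le hord hj hb hpb
    by_cases hjr : j < r
    · have hjr' : j = r' := Fin.ext (by simp only [r']; omega)
      exact Or.inr (Or.inl ⟨hjr' ▸ hj, hap, hpc⟩)
    by_cases hqj : q < j
    · have hjq' : j = q' := Fin.ext (by simp only [q']; omega)
      exact Or.inr (Or.inr ⟨hjq' ▸ hj, hpb, hpc⟩)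
    exact Or.inl ⟨j, not_lt.1 hjr, not_lt.1 hqj, hj, hpc⟩
  · rintro (⟨j, hrj, hjq, hj, hpc⟩ | ⟨hj, hap, hpc⟩ | ⟨hj, hpb, hpc⟩)
    · exact ⟨(hmid j hrj hjq hj).1, (hmid j hrj hjq hj).2, hpc⟩
    · exact ⟨hap, (hord r' q' hr'q' _ hj _ hb).le, hpc⟩
    · exact ⟨(hord r' q' hr'q' _ ha _ hj).le, hpb, hpc⟩

/-- Decomposition of a three-sided query `[a,b] × (−∞, c]` over the children of a tree
node `v`.  The children have pairwise disjoint, consecutively ordered intervals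
`int 0, …, int (t-1)` whose union covers `[a,b]`; `int j ⊆ [a,b]` for `r ≤ j ≤ q`,
`a ∈ int (r-1)` and `b ∈ int (q+1)`.  Then a point `p ∈ S` satisfies
`p.x ∈ [a,b] ∧ p.y ≤ c` iff it is caught by a middle child `S_{v_j}` (`r ≤ j ≤ q`) with
`p.y ≤ c`, or by the dominance query `p.x ≥ a ∧ p.y ≤ c` within `S_{v_{r-1}}`, or by the
dominance query `p.x ≤ b ∧ p.y ≤ c` within `S_{v_{q+1}}`. -/
theorem stmt_18 (S : Finset (ℝ × ℝ))
    (hinj : Set.InjOn (fun p : ℝ × ℝ => p.1) ↑S)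
    (t : ℕ) (int : Fin t → Set ℝ) (a b c : ℝ) (hab : a < b)
    (hdisj : ∀ i j : Fin t, i ≠ j → Disjoint (int i) (int j))
    (hord : ∀ i j : Fin t, i < j → ∀ x ∈ int i, ∀ y ∈ int j, x < y)
    (hcover : Set.Icc a b ⊆ ⋃ j, int j)
    (r q : Fin t) (hr0 : 0 < r.1) (hq1 : q.1 + 1 < t) (hrq : r ≤ q)
    (hmid : ∀ j : Fin t, r ≤ j → j ≤ q → int j ⊆ Set.Icc a b)
    (hmidonly : ∀ j : Fin t, int j ⊆ Set.Icc a b → r ≤ j ∧ j ≤ q)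
    (ha : a ∈ int ⟨r.1 - 1, lt_of_le_of_lt (Nat.sub_le _ _) r.2⟩)
    (hb : b ∈ int ⟨q.1 + 1, hq1⟩) :
    ∀ p ∈ S,
      ((a ≤ p.1 ∧ p.1 ≤ b ∧ p.2 ≤ c) ↔
        ((∃ j : Fin t, r ≤ j ∧ j ≤ q ∧ p.1 ∈ int j ∧ p.2 ≤ c) ∨
          (p.1 ∈ int ⟨r.1 - 1, lt_of_le_of_lt (Nat.sub_le _ _) r.2⟩ ∧ a ≤ p.1 ∧ p.2 ≤ c) ∨
          (p.1 ∈ int ⟨q.1 + 1, hq1⟩ ∧ p.1 ≤ b ∧ p.2 ≤ c))) :=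
  stmt_18_general S t int a b c hord hcover r q hq1 hrq hmid ha hb
end
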